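/- Let X and Y be Hilbert spaces, T : X → Y a bounded linear operator with dim N(T) < ∞, with a least-squares projection approximation {(X_n, T_n)} that has kernel approximability. Then there exists n* ∈ ℕ such that for all n ≥ n*: X_n ⊇ N(T) and N(T_n) = N(T) ⊕ X_n^⊥ (orthogonal direct sum). -/

import Mathlib

/-!
On the finite-dimensional kernel `K = N(T)`, kernel approximability makes every point of `K` close
to `K ⊓ Xₙ` for large `n`; by compactness of the unit sphere of `K` this holds uniformly on a finite
`1/2`-net. A unit vector of `K` orthogonal to `K ⊓ Xₙ` is at distance at least `1` from it, so no
such vector exists eventually, i.e. `K ≤ Xₙ`. Then `x = Pₙx + (x - Pₙx)` splits `N(T ∘ Pₙ)` as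
`K ⊔ Xₙᗮ`, with `K ⟂ Xₙᗮ` since `K ≤ Xₙ`.
-/
open Filter Topology Metric Submodule ContinuousLinearMap

/-- Orthogonal projection onto a subspace `K` (as an operator `H →L[ℝ] H`),
defined whenever `K` admits orthogonal projections (e.g. `K` closed). -/
noncomputable def orthProj {H : Type*} [NormedAddCommGroup H] [InnerProductSpace ℝ H]
    (K : Submodule ℝ H) : H →L[ℝ] H :=
  open scoped Classical in
  if h : HasOrthogonalProjection K then
    haveI := h
    K.subtypeL.comp (orthogonalProjection K)
  else 0

variable {X Y : Type*} [NormedAddCommGroup X] [InnerProductSpace ℝ X] [CompleteSpace X]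
  [NormedAddCommGroup Y] [InnerProductSpace ℝ Y] [CompleteSpace Y]

theorem orthProj_eq_starProjection {H : Type*} [NormedAddCommGroup H] [InnerProductSpace ℝ H]
    (K : Submodule ℝ H) [h : K.HasOrthogonalProjection] : orthProj K = K.starProjection := by
  rw [orthProj, dif_pos h]
  rfl

section

variable {𝕜 E : Type*} [RCLike 𝕜] [NormedAddCommGroup E] [InnerProductSpace 𝕜 E]

theorem Submodule.norm_le_infDist_of_mem_orthogonal (S : Submodule 𝕜 E) {e : E} (he : e ∈ Sᗮ) :
    ‖e‖ ≤ infDist e S := by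
  refine (le_infDist ⟨0, S.zero_mem⟩).2 fun s hs => ?_
  have hpyth : ‖e - s‖ ^ 2 = ‖e‖ ^ 2 + ‖s‖ ^ 2 := by
    rw [sub_eq_add_neg, ← norm_neg s, sq, sq, sq,
      norm_add_sq_eq_norm_sq_add_norm_sq_of_inner_eq_zero (𝕜 := 𝕜) e (-s)
        (by rw [inner_neg_right, S.inner_left_of_mem_orthogonal hs he, neg_zero])]
  rw [dist_eq_norm]
  exact (pow_le_pow_iff_left₀ (norm_nonneg e) (norm_nonneg _) two_ne_zero).1
    (by rw [hpyth]; exact le_add_of_nonneg_right (sq_nonneg _))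

theorem Submodule.eventually_eq_top_of_tendsto_infDist [FiniteDimensional 𝕜 E] {ι : Type*}
    {l : Filter ι} {S : ι → Submodule 𝕜 E}
    (h : ∀ x, Tendsto (fun i => infDist x (S i : Set E)) l (𝓝 0)) : ∀ᶠ i in l, S i = ⊤ := by
  have := FiniteDimensional.proper_rclike 𝕜 E
  obtain ⟨t, -, htfin, htcov⟩ := (isCompact_sphere (0 : E) 1).finite_cover_balls one_half_pos
  filter_upwards [(eventually_all_finite htfin).2 fun c _ => (h c).eventually_lt_const one_half_pos]
    with i hi
  by_contra hne
  obtain ⟨x, hx, hx0⟩ := exists_mem_ne_zero_of_ne_bot (mt orthogonal_eq_bot_iff.1 hne)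
  have he : ‖(‖x‖⁻¹ : 𝕜) • x‖ = 1 := norm_smul_inv_norm hx0
  obtain ⟨c, hct, hec⟩ := Set.mem_iUnion₂.1 (htcov (mem_sphere_zero_iff_norm.2 he))
  have hfar : 1 ≤ infDist ((‖x‖⁻¹ : 𝕜) • x) (S i) :=
    he ▸ (S i).norm_le_infDist_of_mem_orthogonal (smul_mem _ _ hx)
  linarith [hi c hct, mem_ball.1 hec, infDist_le_infDist_add_dist (s := (S i : Set E))
    (x := (‖x‖⁻¹ : 𝕜) • x) (y := c)]

theorem Submodule.eventually_le_of_tendsto_infDist_inf (K : Submodule 𝕜 E) [FiniteDimensional 𝕜 K]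
    {ι : Type*} {l : Filter ι} {V : ι → Submodule 𝕜 E}
    (h : ∀ x ∈ K, Tendsto (fun i => infDist x ((K ⊓ V i : Submodule 𝕜 E) : Set E)) l (𝓝 0)) :
    ∀ᶠ i in l, K ≤ V i := by
  have hK : ∀ x : K, Tendsto (fun i => infDist x ((V i).comap K.subtype : Set K)) l (𝓝 0) := by
    intro x
    convert h x x.2 using 2 with i
    rw [← map_comap_subtype, map_coe]
    exact (infDist_image K.subtypeₗᵢ.isometry).symm
  filter_upwards [eventually_eq_top_of_tendsto_infDist hK] with i hi
  exact comap_subtype_eq_top.1 hi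

theorem Submodule.ker_comp_starProjection {M : Type*} [AddCommGroup M] [Module 𝕜 M]
    (V : Submodule 𝕜 E) [V.HasOrthogonalProjection] (T : E →ₗ[𝕜] M) (h : LinearMap.ker T ≤ V) :
    LinearMap.ker (T ∘ₗ V.starProjection) = LinearMap.ker T ⊔ Vᗮ := by
  refine le_antisymm (fun x hx => ?_) (sup_le (fun u hu => ?_) (fun v hv => ?_))
  · rw [← add_sub_cancel (V.starProjection x) x]
    exact add_mem (mem_sup_left hx) (mem_sup_right (V.sub_starProjection_mem_orthogonal x))
  · rw [LinearMap.mem_ker, LinearMap.comp_apply, coe_coe, V.starProjection_eq_self_iff.2 (h hu)]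
    exact hu
  · rw [LinearMap.mem_ker, LinearMap.comp_apply, coe_coe, V.starProjection_apply_eq_zero_iff.2 hv,
      map_zero]

end

theorem stmt10_general
    (T : X →L[ℝ] Y) (Xn : ℕ → Submodule ℝ X)
    (hfin : ∀ n, FiniteDimensional ℝ (Xn n))
    (Tn : ℕ → X →L[ℝ] Y) (hTn : ∀ n, Tn n = T.comp (orthProj (Xn n)))
    (hker : FiniteDimensional ℝ (LinearMap.ker (T : X →ₗ[ℝ] Y)))
    (hKA : (∀ x : X, x ∈ LinearMap.ker (T : X →ₗ[ℝ] Y) ↔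
      Tendsto (fun n => Metric.infDist x ((LinearMap.ker (T : X →ₗ[ℝ] Y) ⊓ Xn n : Submodule ℝ X) : Set X))
        atTop (𝓝 0))) :
    ∃ nStar : ℕ, ∀ n ≥ nStar,
      LinearMap.ker (T : X →ₗ[ℝ] Y) ≤ Xn n ∧
      LinearMap.ker (Tn n : X →ₗ[ℝ] Y) = LinearMap.ker (T : X →ₗ[ℝ] Y) ⊔ (Xn n)ᗮ ∧
      (∀ u ∈ LinearMap.ker (T : X →ₗ[ℝ] Y), ∀ v ∈ (Xn n)ᗮ, (inner ℝ u v : ℝ) = 0) := by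
  obtain ⟨nStar, hnStar⟩ := eventually_atTop.1 <|
    eventually_le_of_tendsto_infDist_inf _ fun x hx => (hKA x).1 hx
  refine ⟨nStar, fun n hn => ?_⟩
  have hle := hnStar n hn
  have := hfin n
  refine ⟨hle, ?_, fun u hu v hv => inner_right_of_mem_orthogonal (hle hu) hv⟩
  rw [hTn n, orthProj_eq_starProjection, toLinearMap_comp]
  exact (Xn n).ker_comp_starProjection _ hle

/-- Under kernel approximability and `dim N(T) < ∞`, eventually `N(T) ⊆ Xₙ` and
`N(Tₙ) = N(T) ⊕ Xₙᗮ` orthogonally. -/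
theorem stmt10
    (T : X →L[ℝ] Y) (Xn : ℕ → Submodule ℝ X)
    (hfin : ∀ n, FiniteDimensional ℝ (Xn n))
    (hinf : ¬ FiniteDimensional ℝ X)
    (hproj : ∀ x : X, Tendsto (fun n => orthProj (Xn n) x) atTop (𝓝 x))
    (Tn : ℕ → X →L[ℝ] Y) (hTn : ∀ n, Tn n = T.comp (orthProj (Xn n)))
    (hker : FiniteDimensional ℝ (LinearMap.ker (T : X →ₗ[ℝ] Y)))
    (hKA : (∀ x : X, x ∈ LinearMap.ker (T : X →ₗ[ℝ] Y) ↔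
      Tendsto (fun n => Metric.infDist x ((LinearMap.ker (T : X →ₗ[ℝ] Y) ⊓ Xn n : Submodule ℝ X) : Set X))
        atTop (𝓝 0))) :
    ∃ nStar : ℕ, ∀ n ≥ nStar,
      LinearMap.ker (T : X →ₗ[ℝ] Y) ≤ Xn n ∧
      LinearMap.ker (Tn n : X →ₗ[ℝ] Y) = LinearMap.ker (T : X →ₗ[ℝ] Y) ⊔ (Xn n)ᗮ ∧
      (∀ u ∈ LinearMap.ker (T : X →ₗ[ℝ] Y), ∀ v ∈ (Xn n)ᗮ, (inner ℝ u v : ℝ) = 0) :=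
  stmt10_general T Xn hfin Tn hTn hker hKA
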